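/- arXiv:2111.00609 — 3 statements merged into one kernel-verified Lean document; each statement's English description precedes it below -/
import Mathlib

section
/- Suppose four points A = (a,0), B = (0,b), C = (c,0), D = (0,d) in ℝ² with a·c < 0 and b·d < 0 satisfy |a−c| > 2, |b−d| > 2, and all four of √(a²+b²), √(b²+c²), √(c²+d²), √(d²+a²) are at most 2. Then the distance of each of the four centers A, B, C, D from the origin is strictly greater than 2 − √3 and strictly less than √3. -/
lemma sq_le_four_of_sqrt_le {x y : ℝ} (h : Real.sqrt (x ^ 2 + y ^ 2) ≤ 2) :
    x ^ 2 + y ^ 2 ≤ 4 := by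
  nlinarith [Real.sq_sqrt (show (0:ℝ) ≤ x ^ 2 + y ^ 2 by positivity),
    Real.sqrt_nonneg (x ^ 2 + y ^ 2)]

lemma abs_sum_gt {x y : ℝ} (h : |x - y| > 2) : |x| + |y| > 2 := by
  have h1 : |x - y| ≤ |x| + |y| := abs_sub x y
  linarith

lemma upper_bound {x y z : ℝ} (hyz : |y| + |z| > 2)
    (h1 : x ^ 2 + y ^ 2 ≤ 4) (h2 : x ^ 2 + z ^ 2 ≤ 4) : |x| < Real.sqrt 3 := by
  have hx : x ^ 2 < 3 := by
    rcases le_total (|y|) (|z|) with h | h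
    · nlinarith [sq_abs z, abs_nonneg y, abs_nonneg z]
    · nlinarith [sq_abs y, abs_nonneg y, abs_nonneg z]
  rw [show (3:ℝ) = Real.sqrt 3 ^ 2 from (Real.sq_sqrt (by norm_num)).symm] at hx
  have := Real.sqrt_nonneg 3
  nlinarith [sq_abs x, abs_nonneg x]

/-- For an induced 4-cycle of unit disks centered at `(a,0)`, `(0,b)`, `(c,0)`,
`(0,d)` on the two coordinate axes (with opposite disks on different sides of
the origin), the distance of each center from the origin is strictly between
`2 - √3` and `√3`. -/
theorem stmt_3 (a b c d : ℝ)
    (hac : a * c < 0) (hbd : b * d < 0)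
    (hAC : |a - c| > 2) (hBD : |b - d| > 2)
    (hAB : Real.sqrt (a ^ 2 + b ^ 2) ≤ 2)
    (hBC : Real.sqrt (b ^ 2 + c ^ 2) ≤ 2)
    (hCD : Real.sqrt (c ^ 2 + d ^ 2) ≤ 2)
    (hDA : Real.sqrt (d ^ 2 + a ^ 2) ≤ 2) :
    (2 - Real.sqrt 3 < |a| ∧ |a| < Real.sqrt 3) ∧
    (2 - Real.sqrt 3 < |b| ∧ |b| < Real.sqrt 3) ∧
    (2 - Real.sqrt 3 < |c| ∧ |c| < Real.sqrt 3) ∧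
    (2 - Real.sqrt 3 < |d| ∧ |d| < Real.sqrt 3) := by
  have h1 := sq_le_four_of_sqrt_le hAB
  have h2 := sq_le_four_of_sqrt_le hBC
  have h3 := sq_le_four_of_sqrt_le hCD
  have h4 := sq_le_four_of_sqrt_le hDA
  have hACs := abs_sum_gt hAC
  have hBDs := abs_sum_gt hBD
  have ha : |a| < Real.sqrt 3 := upper_bound hBDs (by linarith [h1]) (by linarith [h4])
  have hc : |c| < Real.sqrt 3 := upper_bound hBDs (by linarith [h2]) (by linarith [h3])
  have hb : |b| < Real.sqrt 3 := upper_bound hACs (by linarith [h1]) (by linarith [h2])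
  have hd : |d| < Real.sqrt 3 := upper_bound hACs (by linarith [h4]) (by linarith [h3])
  exact ⟨⟨by linarith, ha⟩, ⟨by linarith, hb⟩, ⟨by linarith, hc⟩, ⟨by linarith, hd⟩⟩
end

section
/- There do not exist five points p₁,...,p₅ in ℝ², each lying on the x-axis or the y-axis, such that the unit-disk intersection graph on these points (with pᵢ adjacent to pⱼ iff dist(pᵢ,pⱼ) ≤ 2) is an induced 5-cycle. -/
set_option maxHeartbeats 1000000

/-- Adjacency in the standard 5-cycle on `Fin 5`. -/
abbrev udAdj5 (i j : Fin 5) : Prop := j = i + 1 ∨ i = j + 1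

lemma ud_cd0 : ∀ A B C : Fin 5, A ≠ B → A ≠ C → B ≠ C →
    ¬udAdj5 A B ∨ ¬udAdj5 B C ∨ ¬udAdj5 A C := by decide

lemma ud_cd1 : ∀ A B C : Fin 5, A ≠ B → A ≠ C → B ≠ C → ¬udAdj5 A C →
    ∃ u v : Fin 5, u ≠ A ∧ u ≠ B ∧ u ≠ C ∧ v ≠ A ∧ v ≠ B ∧ v ≠ C ∧
      udAdj5 u A ∧ ¬udAdj5 u B ∧ udAdj5 v C ∧ ¬udAdj5 v B := by decide

lemma ud_rel : ∀ e : Fin 5,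
    (e+1 ≠ e) ∧ (e+2 ≠ e) ∧ (e+3 ≠ e) ∧ (e+4 ≠ e) ∧
    udAdj5 e (e+1) ∧ udAdj5 e (e+4) ∧ ¬udAdj5 e (e+2) ∧ ¬udAdj5 e (e+3) ∧
    udAdj5 (e+1) (e+2) ∧ udAdj5 (e+2) (e+3) ∧ udAdj5 (e+3) (e+4) ∧
    ¬udAdj5 (e+1) (e+3) ∧ ¬udAdj5 (e+2) (e+4) ∧
    ¬udAdj5 (e+3) (e+1) ∧ ¬udAdj5 (e+4) (e+2) ∧
    (e+1 ≠ e+3) ∧ (e+2 ≠ e+4) := by decide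

lemma ud_gapLe {a b : ℝ} (h : (a - b) ^ 2 ≤ 4) : a - b ≤ 2 ∧ b - a ≤ 2 := by
  constructor <;> nlinarith [sq_nonneg (a - b)]

lemma ud_gapGt {a b : ℝ} (hle : a ≤ b) (h : 4 < (a - b) ^ 2) : 2 < b - a := by
  nlinarith

lemma ud_sq_lt_left {a b : ℝ} (hab : a ≤ b) (h : a ^ 2 < b ^ 2) : 0 < b := by
  by_contra hb
  push_neg at hb
  nlinarith [mul_nonneg (by linarith : (0:ℝ) ≤ b - a) (by linarith : (0:ℝ) ≤ -(a + b))]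

lemma ud_sq_lt_right {a b : ℝ} (hab : b ≤ a) (h : a ^ 2 < b ^ 2) : b < 0 := by
  by_contra hb
  push_neg at hb
  nlinarith [mul_nonneg (by linarith : (0:ℝ) ≤ a - b) (by linarith : (0:ℝ) ≤ a + b)]

/-- The "exactly three on the x-axis" case, with the middle point `m`. -/
lemma ud_helper3 (x y : Fin 5 → ℝ)
    (near : ∀ i j, udAdj5 i j → (x i - x j) ^ 2 + (y i - y j) ^ 2 ≤ 4)
    (far : ∀ i j, i ≠ j → ¬udAdj5 i j → 4 < (x i - x j) ^ 2 + (y i - y j) ^ 2)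
    (s m t : Fin 5) (hsm : s ≠ m) (hst : s ≠ t) (hmt : m ≠ t)
    (hys : y s = 0) (hym : y m = 0) (hyt : y t = 0)
    (h1 : x s ≤ x m) (h2 : x m ≤ x t)
    (hother : ∀ u, u ≠ s → u ≠ m → u ≠ t → x u = 0) : False := by
  have hnst : ¬udAdj5 s t := by
    intro hAdj
    have h := near s t hAdj
    rw [hys, hyt] at h
    have hgap : x t - x s ≤ 2 := by nlinarith
    rcases ud_cd0 s m t hsm hst hmt with hn | hn | hn
    · have := far s m hsm hn; rw [hys, hym] at this; nlinarith
    · have := far m t hmt hn; rw [hym, hyt] at this; nlinarith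
    · have := far s t hst hn; rw [hys, hyt] at this; nlinarith
  obtain ⟨u, v, hus, hum, hut, hvs, hvm, hvt, hAu, hnAub, hAv, hnAvb⟩ :=
    ud_cd1 s m t hsm hst hmt hnst
  have hxu : x u = 0 := hother u hus hum hut
  have hxv : x v = 0 := hother v hvs hvm hvt
  have c1 := near u s hAu
  rw [hxu, hys] at c1
  have c2 := far u m hum hnAub
  rw [hxu, hym] at c2
  have c3 := near v t hAv
  rw [hxv, hyt] at c3
  have c4 := far v m hvm hnAvb
  rw [hxv, hym] at c4
  have hsq1 : x s ^ 2 < x m ^ 2 := by nlinarith [c1, c2]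
  have hsq2 : x t ^ 2 < x m ^ 2 := by nlinarith [c3, c4]
  rcases le_total (x m) 0 with h | h
  · have := ud_sq_lt_left h1 hsq1; linarith
  · have := ud_sq_lt_right h2 hsq2; linarith

lemma ud_aux (x y : Fin 5 → ℝ)
    (hax : ∀ i, y i = 0 ∨ x i = 0)
    (near : ∀ i j, udAdj5 i j → (x i - x j) ^ 2 + (y i - y j) ^ 2 ≤ 4)
    (far : ∀ i j, i ≠ j → ¬udAdj5 i j → 4 < (x i - x j) ^ 2 + (y i - y j) ^ 2)
    (hc : 3 ≤ (Finset.univ.filter (fun i => y i = 0)).card) : False := by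
  classical
  set X := Finset.univ.filter (fun i => y i = 0) with hX
  have N : ∀ i j, udAdj5 i j → (x i - x j) ^ 2 ≤ 4 := fun i j h => by
    nlinarith [near i j h, sq_nonneg (y i - y j)]
  have F : ∀ i j, i ≠ j → ¬udAdj5 i j → y i = 0 → y j = 0 → 4 < (x i - x j) ^ 2 := by
    intro i j h h' hyi hyj
    have := far i j h h'
    rw [hyi, hyj] at this
    nlinarith
  have hle : X.card ≤ 5 := by
    have := X.card_le_univ
    simpa using this
  have hcases : X.card = 3 ∨ X.card = 4 ∨ X.card = 5 := by omega
  rcases hcases with h3 | h4 | h5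
  · -- exactly three points on the x-axis
    obtain ⟨a, b, c, hab, hac, hbc, hXeq⟩ := Finset.card_eq_three.mp h3
    have hmem : ∀ i, i ∈ X → y i = 0 := fun i hi => (Finset.mem_filter.mp hi).2
    have hya : y a = 0 := hmem a (by rw [hXeq]; simp)
    have hyb : y b = 0 := hmem b (by rw [hXeq]; simp)
    have hyc : y c = 0 := hmem c (by rw [hXeq]; simp)
    have hother : ∀ u, u ≠ a → u ≠ b → u ≠ c → x u = 0 := by
      intro u u1 u2 u3
      have hu : u ∉ X := by rw [hXeq]; simp [u1, u2, u3]
      have hyu : y u ≠ 0 := by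
        intro h
        exact hu (by rw [hX]; simp [h])
      exact (hax u).resolve_left hyu
    rcases le_total (x a) (x b) with h1 | h1 <;> rcases le_total (x b) (x c) with h2 | h2 <;>
      rcases le_total (x a) (x c) with h3 | h3
    · exact ud_helper3 x y near far a b c hab hac hbc hya hyb hyc h1 h2 hother
    · exact ud_helper3 x y near far a b c hab hac hbc hya hyb hyc h1 h2 hother
    · exact ud_helper3 x y near far a c b hac hab hbc.symm hya hyc hyb h3 h2
        (fun u u1 u2 u3 => hother u u1 u3 u2)
    · exact ud_helper3 x y near far c a b hac.symm hbc.symm hab hyc hya hyb h3 h1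
        (fun u u1 u2 u3 => hother u u2 u3 u1)
    · exact ud_helper3 x y near far b a c hab.symm hbc hac hyb hya hyc h1 h3
        (fun u u1 u2 u3 => hother u u2 u1 u3)
    · exact ud_helper3 x y near far b c a hbc hab.symm hac.symm hyb hyc hya h2 h3
        (fun u u1 u2 u3 => hother u u3 u1 u2)
    · exact ud_helper3 x y near far c b a hbc.symm hac.symm hab.symm hyc hyb hya h2 h1
        (fun u u1 u2 u3 => hother u u3 u2 u1)
    · exact ud_helper3 x y near far c b a hbc.symm hac.symm hab.symm hyc hyb hya h2 h1
        (fun u u1 u2 u3 => hother u u3 u2 u1)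
  · -- exactly four points on the x-axis
    have hXc : Xᶜ.card = 1 := by
      rw [Finset.card_compl, h4]
      rfl
    obtain ⟨e, he⟩ := Finset.card_eq_one.mp hXc
    have hyne : ∀ i, i ≠ e → y i = 0 := by
      intro i hi
      by_contra hyi
      have h1 : i ∈ Xᶜ := Finset.mem_compl.mpr (by rw [hX]; simp [hyi])
      rw [he] at h1
      exact hi (Finset.mem_singleton.mp h1)
    have hye : y e ≠ 0 := by
      have h1 : e ∈ Xᶜ := by rw [he]; exact Finset.mem_singleton_self e
      have h2 := Finset.mem_compl.mp h1
      rw [hX] at h2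
      simpa using h2
    have hxe : x e = 0 := (hax e).resolve_left hye
    obtain ⟨d1, d2, d3, d4, hA1, hA4, hN2, hN3, hA12, hA23, hA34, hN13, hN24, hN31, hN42,
      hne13, hne24⟩ := ud_rel e
    have hy1 : y (e+1) = 0 := hyne _ d1
    have hy2 : y (e+2) = 0 := hyne _ d2
    have hy3 : y (e+3) = 0 := hyne _ d3
    have hy4 : y (e+4) = 0 := hyne _ d4
    have c1 := near e (e+1) hA1
    rw [hxe, hy1] at c1
    have c4 := near e (e+4) hA4
    rw [hxe, hy4] at c4
    have c2 := far e (e+2) d2.symm hN2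
    rw [hxe, hy2] at c2
    have hsq1 : x (e+1) ^ 2 < x (e+2) ^ 2 := by nlinarith [c1, c2]
    have hsq4 : x (e+4) ^ 2 < x (e+2) ^ 2 := by nlinarith [c4, c2]
    have n12 := ud_gapLe (N (e+1) (e+2) hA12)
    have n23 := ud_gapLe (N (e+2) (e+3) hA23)
    have n34 := ud_gapLe (N (e+3) (e+4) hA34)
    have f13 := F (e+1) (e+3) hne13 hN13 hy1 hy3
    have f31 := F (e+3) (e+1) hne13.symm hN31 hy3 hy1
    have f24 := F (e+2) (e+4) hne24 hN24 hy2 hy4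
    have f42 := F (e+4) (e+2) hne24.symm hN42 hy4 hy2
    rcases le_total (x (e+1)) (x (e+2)) with h01 | h01
    · have h13 : 2 < x (e+3) - x (e+1) := by
        rcases le_total (x (e+1)) (x (e+3)) with h | h
        · exact ud_gapGt h f13
        · exfalso
          have := ud_gapGt h f31
          linarith [n23.1]
      have h24 : 2 < x (e+4) - x (e+2) := by
        rcases le_total (x (e+2)) (x (e+4)) with h | h
        · exact ud_gapGt h f24
        · exfalso
          have := ud_gapGt h f42
          linarith [n34.1, n12.2, h13]
      have hpos : 0 < x (e+2) := ud_sq_lt_left h01 hsq1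
      nlinarith [hsq4, mul_pos (by linarith : (0:ℝ) < x (e+4) - x (e+2))
        (by linarith : (0:ℝ) < x (e+4) + x (e+2))]
    · have h13 : 2 < x (e+1) - x (e+3) := by
        rcases le_total (x (e+3)) (x (e+1)) with h | h
        · exact ud_gapGt h f31
        · exfalso
          have := ud_gapGt h f13
          linarith [n23.2]
      have h24 : 2 < x (e+2) - x (e+4) := by
        rcases le_total (x (e+4)) (x (e+2)) with h | h
        · exact ud_gapGt h f42
        · exfalso
          have := ud_gapGt h f24
          linarith [n34.2, n12.1, h13]
      have hneg : x (e+2) < 0 := ud_sq_lt_right h01 hsq1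
      nlinarith [hsq4, mul_pos (by linarith : (0:ℝ) < x (e+2) - x (e+4))
        (by linarith : (0:ℝ) < -(x (e+4) + x (e+2)))]
  · -- all five points on the x-axis
    have hXu : X = Finset.univ := Finset.eq_univ_of_card X (by rw [h5]; rfl)
    have hy : ∀ i, y i = 0 := by
      intro i
      have : i ∈ X := hXu ▸ Finset.mem_univ i
      exact (Finset.mem_filter.mp this).2
    have e01 := ud_gapLe (N 0 1 (by decide))
    have e12 := ud_gapLe (N 1 2 (by decide))
    have e23 := ud_gapLe (N 2 3 (by decide))
    have e34 := ud_gapLe (N 3 4 (by decide))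
    have e40 := ud_gapLe (N 4 0 (by decide))
    have f02 := F 0 2 (by decide) (by decide) (hy 0) (hy 2)
    have f20 := F 2 0 (by decide) (by decide) (hy 2) (hy 0)
    have f13 := F 1 3 (by decide) (by decide) (hy 1) (hy 3)
    have f31 := F 3 1 (by decide) (by decide) (hy 3) (hy 1)
    have f14 := F 1 4 (by decide) (by decide) (hy 1) (hy 4)
    have f41 := F 4 1 (by decide) (by decide) (hy 4) (hy 1)
    rcases le_total (x 0) (x 1) with h01 | h01
    · have h02 : 2 < x 2 - x 0 := by
        rcases le_total (x 0) (x 2) with h | h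
        · exact ud_gapGt h f02
        · exfalso
          have := ud_gapGt h f20
          linarith [e12.1]
      have h13 : 2 < x 3 - x 1 := by
        rcases le_total (x 1) (x 3) with h | h
        · exact ud_gapGt h f13
        · exfalso
          have := ud_gapGt h f31
          linarith [e23.1, e01.2, h02]
      have h14' : x 1 < x 4 := by linarith [e34.1, h13]
      have h14 : 2 < x 4 - x 1 := ud_gapGt (le_of_lt h14') f14
      linarith [e40.1, h01, h14]
    · have h02 : 2 < x 0 - x 2 := by
        rcases le_total (x 2) (x 0) with h | h
        · exact ud_gapGt h f20
        · exfalso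
          have := ud_gapGt h f02
          linarith [e12.2]
      have h13 : 2 < x 1 - x 3 := by
        rcases le_total (x 3) (x 1) with h | h
        · exact ud_gapGt h f31
        · exfalso
          have := ud_gapGt h f13
          linarith [e23.2, e01.1, h02]
      have h14' : x 4 < x 1 := by linarith [e34.2, h13]
      have h14 : 2 < x 1 - x 4 := ud_gapGt (le_of_lt h14') f41
      linarith [e40.2, h01, h14]

/-- The 5-cycle `C₅` cannot be realized as a unit disk graph with all centers
on the union of the x-axis and the y-axis: there are no five distinct points,
each on one of the two axes, with consecutive points (cyclically) at distance
at most `2` and non-consecutive points at distance greater than `2`. -/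
theorem stmt_4 :
    ¬ ∃ p : Fin 5 → ℂ, Function.Injective p ∧
      (∀ i, (p i).im = 0 ∨ (p i).re = 0) ∧
      (∀ i, dist (p i) (p (i + 1)) ≤ 2) ∧
      (∀ i j : Fin 5, i ≠ j → j ≠ i + 1 → i ≠ j + 1 → dist (p i) (p j) > 2) := by
  classical
  rintro ⟨p, hinj, hax, hnear, hfar⟩
  have hd : ∀ i j, dist (p i) (p j) ^ 2 =
      ((p i).re - (p j).re) ^ 2 + ((p i).im - (p j).im) ^ 2 := by
    intro i j
    rw [Complex.dist_eq_re_im, Real.sq_sqrt (by positivity)]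
  have near : ∀ i j, udAdj5 i j →
      ((p i).re - (p j).re) ^ 2 + ((p i).im - (p j).im) ^ 2 ≤ 4 := by
    intro i j h
    rw [← hd i j]
    rcases h with h | h
    · subst h
      nlinarith [hnear i, dist_nonneg (x := p i) (y := p (i + 1))]
    · subst h
      rw [dist_comm]
      nlinarith [hnear j, dist_nonneg (x := p j) (y := p (j + 1))]
  have far : ∀ i j, i ≠ j → ¬udAdj5 i j →
      4 < ((p i).re - (p j).re) ^ 2 + ((p i).im - (p j).im) ^ 2 := by
    intro i j hij h
    have h1 : j ≠ i + 1 := fun hh => h (Or.inl hh)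
    have h2 : i ≠ j + 1 := fun hh => h (Or.inr hh)
    have hf := hfar i j hij h1 h2
    rw [← hd i j]
    nlinarith [hf, dist_nonneg (x := p i) (y := p j)]
  have hcard : 3 ≤ (Finset.univ.filter (fun i => (p i).im = 0)).card ∨
      3 ≤ (Finset.univ.filter (fun i => (p i).re = 0)).card := by
    by_contra hno
    push_neg at hno
    obtain ⟨hA, hB⟩ := hno
    have hsub : (Finset.univ : Finset (Fin 5)) ⊆
        (Finset.univ.filter (fun i => (p i).im = 0)) ∪
        (Finset.univ.filter (fun i => (p i).re = 0)) := by
      intro i _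
      rcases hax i with h | h
      · exact Finset.mem_union_left _ (Finset.mem_filter.mpr ⟨Finset.mem_univ _, h⟩)
      · exact Finset.mem_union_right _ (Finset.mem_filter.mpr ⟨Finset.mem_univ _, h⟩)
    have h5 := Finset.card_le_card hsub
    have hu := Finset.card_union_le
      (Finset.univ.filter (fun i => (p i).im = 0))
      (Finset.univ.filter (fun i => (p i).re = 0))
    simp only [Finset.card_univ, Fintype.card_fin] at h5
    omega
  rcases hcard with h | h
  · exact ud_aux (fun i => (p i).re) (fun i => (p i).im) hax near far h
  · exact ud_aux (fun i => (p i).im) (fun i => (p i).re) (fun i => (hax i).symm)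
      (fun i j hadj => by have := near i j hadj; linarith)
      (fun i j hij hadj => by have := far i j hij hadj; linarith)
      h
end

section
/- There do not exist six points u, p₁,...,p₅ in ℝ², each lying on the x-axis or the y-axis, such that dist(u,pᵢ) ≤ 2 for all i and dist(pᵢ,pⱼ) > 2 for all i ≠ j. (The 5-star K_{1,5} cannot be realized as a unit disk graph on two perpendicular lines.) -/
/-!
Five points on the union of the two axes put three of them on one axis. Measuring along that
axis, the three coordinates lie within distance 2 of the projection of the centre (projection
onto an axis does not increase distances), and on a line an interval of length 4 cannot hold
three points pairwise more than 2 apart.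
-/

open Finset

theorem Real.dist_le_of_lt_dist_of_lt_dist {m r a b c : ℝ} (ha : dist a m ≤ r)
    (hb : dist b m ≤ r) (hc : dist c m ≤ r) (hab : r < dist a b) (hac : r < dist a c) :
    dist b c ≤ r := by
  rw [Real.dist_eq] at *
  rcases abs_le.mp ha with ⟨ha₁, ha₂⟩
  rcases abs_le.mp hb with ⟨hb₁, hb₂⟩
  rcases abs_le.mp hc with ⟨hc₁, hc₂⟩
  refine abs_le.mpr ⟨?_, ?_⟩ <;>
    rcases lt_abs.mp hab with h | h <;> rcases lt_abs.mp hac with h' | h' <;> linarith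

theorem Complex.dist_re_le_dist (z w : ℂ) : dist z.re w.re ≤ dist z w := by
  rw [Real.dist_eq, Complex.dist_eq, ← Complex.sub_re]
  exact Complex.abs_re_le_norm _

theorem Complex.dist_le_of_im_eq_zero {u a b c : ℂ} {r : ℝ} (ha : a.im = 0) (hb : b.im = 0)
    (hc : c.im = 0) (hua : dist u a ≤ r) (hub : dist u b ≤ r) (huc : dist u c ≤ r)
    (hab : r < dist a b) (hac : r < dist a c) : dist b c ≤ r := by
  have hre {z : ℂ} (huz : dist u z ≤ r) : dist z.re u.re ≤ r :=
    (dist_comm z.re u.re ▸ dist_re_le_dist u z).trans huz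
  rw [dist_of_im_eq (ha.trans hb.symm)] at hab
  rw [dist_of_im_eq (ha.trans hc.symm)] at hac
  rw [dist_of_im_eq (hb.trans hc.symm)]
  exact Real.dist_le_of_lt_dist_of_lt_dist (hre hua) (hre hub) (hre huc) hab hac

theorem Complex.dist_I_mul (z w : ℂ) : dist (I * z) (I * w) = dist z w := by
  rw [Complex.dist_eq, Complex.dist_eq, ← mul_sub, norm_mul, norm_I, one_mul]

theorem Complex.dist_le_of_re_eq_zero {u a b c : ℂ} {r : ℝ} (ha : a.re = 0) (hb : b.re = 0)
    (hc : c.re = 0) (hua : dist u a ≤ r) (hub : dist u b ≤ r) (huc : dist u c ≤ r)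
    (hab : r < dist a b) (hac : r < dist a c) : dist b c ≤ r := by
  rw [← dist_I_mul] at hua hub huc hab hac ⊢
  exact dist_le_of_im_eq_zero (by simpa) (by simpa) (by simpa) hua hub huc hab hac

/-- The star `K_{1,5}` cannot be realized as a unit disk graph on two
perpendicular lines: there are no points `u, p₁, …, p₅`, each on the x-axis or
the y-axis, with `dist u pᵢ ≤ 2` for all `i` and `dist pᵢ pⱼ > 2` for `i ≠ j`. -/
theorem stmt_5 :
    ¬ ∃ (u : ℂ) (p : Fin 5 → ℂ),
      (u.im = 0 ∨ u.re = 0) ∧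
      (∀ i, (p i).im = 0 ∨ (p i).re = 0) ∧
      (∀ i, dist u (p i) ≤ 2) ∧
      (∀ i j : Fin 5, i ≠ j → dist (p i) (p j) > 2) := by
  rintro ⟨u, p, -, hax, hclose, hfar⟩
  classical
  have hcard := card_filter_add_card_filter_not (s := univ) fun i ↦ (p i).im = 0
  rw [card_univ, Fintype.card_fin] at hcard
  rcases (by omega : 2 < #(univ.filter fun i ↦ (p i).im = 0) ∨
      2 < #(univ.filter fun i ↦ ¬(p i).im = 0)) with h | h
  · obtain ⟨a, ha, b, hb, c, hc, hab, hac, hbc⟩ := two_lt_card.mp h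
    simp only [mem_filter, mem_univ, true_and] at ha hb hc
    exact (hfar b c hbc).not_ge <| Complex.dist_le_of_im_eq_zero ha hb hc (hclose a) (hclose b)
      (hclose c) (hfar a b hab) (hfar a c hac)
  · obtain ⟨a, ha, b, hb, c, hc, hab, hac, hbc⟩ := two_lt_card.mp h
    simp only [mem_filter, mem_univ, true_and] at ha hb hc
    exact (hfar b c hbc).not_ge <| Complex.dist_le_of_re_eq_zero ((hax a).resolve_left ha)
      ((hax b).resolve_left hb) ((hax c).resolve_left hc) (hclose a) (hclose b) (hclose c)
      (hfar a b hab) (hfar a c hac)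
end
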